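/- Every heroic set of tournaments contains a tournament belonging to 𝒟 and contains a tournament belonging to 𝒜. -/

import Mathlib

/-- A tournament: a finite vertex type with an orientation of each pair of
distinct vertices. -/
structure Tournament : Type 1 where
  V : Type
  [fintypeV : Fintype V]
  adj : V → V → Prop
  irrefl : ∀ v, ¬ adj v v
  total : ∀ u v, u ≠ v → adj u v ∨ adj v u
  asymm : ∀ u v, adj u v → ¬ adj v u

attribute [instance] Tournament.fintypeV

namespace Tournament

/-- A set of vertices is transitive: the induced subtournament has no directed
cycle (equivalently, the adjacency relation is transitive on it). -/
def IsTransSet (T : Tournament) (S : Set T.V) : Prop :=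
  ∀ a ∈ S, ∀ b ∈ S, ∀ c ∈ S, T.adj a b → T.adj b c → T.adj a c

/-- The chromatic number of a tournament: least number of transitive sets
partitioning the vertex set. -/
noncomputable def chromNum (T : Tournament) : ℕ :=
  sInf {k | ∃ c : T.V → Fin k, ∀ i, T.IsTransSet {v | c v = i}}

/-- `T.Contains S`: `S` is isomorphic to a subtournament of `T`. -/
def Contains (T S : Tournament) : Prop :=
  ∃ f : S.V → T.V, Function.Injective f ∧ ∀ u v, S.adj u v ↔ T.adj (f u) (f v)

/-- `T.Iso S`: `T` and `S` are isomorphic tournaments. -/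
def Iso (T S : Tournament) : Prop :=
  ∃ f : S.V → T.V, Function.Bijective f ∧ ∀ u v, S.adj u v ↔ T.adj (f u) (f v)

/-- A set of tournaments is heroic if excluding all its members bounds the
chromatic number. -/
def Heroic (H : Set Tournament) : Prop :=
  ∃ c, ∀ T : Tournament, (∀ X ∈ H, ¬ T.Contains X) → T.chromNum ≤ c

/-- A tournament is a hero if `{H}` is heroic. -/
def IsHero (H : Tournament) : Prop :=
  ∃ c, ∀ T : Tournament, ¬ T.Contains H → T.chromNum ≤ c

/-- A class of tournaments is hereditary if closed under subtournaments up to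
isomorphism. -/
def Hereditary (C : Set Tournament) : Prop :=
  ∀ T ∈ C, ∀ S : Tournament, T.Contains S → S ∈ C

def StronglyConnected (T : Tournament) : Prop :=
  ∀ u v : T.V, Relation.ReflTransGen T.adj u v

/-- A transitive tournament (no directed cycle). -/
def IsTransTour (T : Tournament) : Prop :=
  ∀ a b c : T.V, T.adj a b → T.adj b c → T.adj a c

/-- Direction rule for Δ-partitions with 0-based part-indices (a part is at an
odd position in the 1-based sense iff its 0-based index is even).
`deltaDir i j` holds iff part `i` is complete to part `j`:
for `i < j`, part `j` beats part `i` iff both positions are (1-based) odd. -/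
def deltaDir {m : ℕ} (i j : Fin m) : Prop :=
  (i < j ∧ ¬ (Even i.1 ∧ Even j.1)) ∨ (j < i ∧ (Even i.1 ∧ Even j.1))

theorem deltaDir_irrefl {m : ℕ} (i : Fin m) : ¬ deltaDir i i := by
  rintro (⟨h, _⟩ | ⟨h, _⟩) <;> exact lt_irrefl _ h

theorem deltaDir_total {m : ℕ} {i j : Fin m} (h : i ≠ j) : deltaDir i j ∨ deltaDir j i := by
  rcases lt_or_gt_of_ne h with hl | hl
  · by_cases he : Even i.1 ∧ Even j.1
    · exact Or.inr (Or.inr ⟨hl, he.2, he.1⟩)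
    · exact Or.inl (Or.inl ⟨hl, he⟩)
  · by_cases he : Even i.1 ∧ Even j.1
    · exact Or.inl (Or.inr ⟨hl, he⟩)
    · exact Or.inr (Or.inl ⟨hl, fun hc => he ⟨hc.2, hc.1⟩⟩)

theorem deltaDir_asymm {m : ℕ} {i j : Fin m} (h : deltaDir i j) : ¬ deltaDir j i := by
  rcases h with ⟨h1, h2⟩ | ⟨h1, h2⟩ <;> rintro (⟨g1, g2⟩ | ⟨g1, g2⟩)
  · exact lt_asymm h1 g1
  · exact h2 ⟨g2.2, g2.1⟩
  · exact g2 ⟨h2.2, h2.1⟩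
  · exact lt_asymm h1 g1

/-- The tournament `Δ(F 0, F 1, …, F (m-1))` given by a Δ-partition rule:
within a part use the part's edges; between parts, edges follow `deltaDir`.
For `m = 3` this is the trisection `Δ(A,B,C)` (`X ⇒ Y`, `Y ⇒ Z`, `Z ⇒ X`),
and for `m = 2` it is `F 0 ⇒ F 1`. -/
def deltaSum {m : ℕ} (F : Fin m → Tournament) : Tournament where
  V := (i : Fin m) × (F i).V
  adj x y := deltaDir x.1 y.1 ∨
    ∃ (i : Fin m) (u v : (F i).V), (F i).adj u v ∧ x = ⟨i, u⟩ ∧ y = ⟨i, v⟩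
  irrefl := by
    rintro x (h | ⟨i, u, v, hadj, rfl, h2⟩)
    · exact deltaDir_irrefl _ h
    · injection h2 with h h'
      subst h'
      exact (F i).irrefl u hadj
  total := by
    rintro ⟨i, a⟩ ⟨j, b⟩ hne
    by_cases hij : i = j
    · subst hij
      have hab : a ≠ b := fun h => hne (by rw [h])
      rcases (F i).total a b hab with h | h
      · exact Or.inl (Or.inr ⟨i, a, b, h, rfl, rfl⟩)
      · exact Or.inr (Or.inr ⟨i, b, a, h, rfl, rfl⟩)
    · rcases deltaDir_total hij with h | h
      · exact Or.inl (Or.inl h)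
      · exact Or.inr (Or.inl h)
  asymm := by
    rintro x y hxy hyx
    rcases hxy with h | ⟨i, u, v, hadj, rfl, rfl⟩
    · rcases hyx with g | ⟨j, p, q, gadj, rfl, rfl⟩
      · exact deltaDir_asymm h g
      · exact deltaDir_irrefl _ h
    · rcases hyx with g | ⟨j, p, q, gadj, h1, h2⟩
      · exact deltaDir_irrefl _ g
      · injection h1 with hij hp
        subst hij
        obtain rfl := eq_of_heq hp
        injection h2 with h h'
        subst h'
        exact (F i).asymm u v hadj gadj

/-- The one-vertex tournament `I`. -/
def oneTour : Tournament where
  V := Unit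
  adj _ _ := False
  irrefl := fun _ h => h
  total := fun u v h => (h (Subsingleton.elim u v)).elim
  asymm := fun _ _ h => h.elim

/-- The transitive tournament `L k` on `k` vertices. -/
def linTour (k : ℕ) : Tournament where
  V := Fin k
  adj i j := i < j
  irrefl := fun v => lt_irrefl v
  total := fun _ _ h => lt_or_gt_of_ne h
  asymm := fun _ _ h => lt_asymm h

/-- `Dtour n` is the tournament `D_n`: `D_1 = I`, `D_n = Δ(I, D_{n-1}, D_{n-1})`. -/
def Dtour : ℕ → Tournament
  | 0 => oneTour
  | 1 => oneTour
  | n + 2 => deltaSum ![oneTour, Dtour (n + 1), Dtour (n + 1)]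

/-- `Atour n` is the tournament `A_n`: `A_1 = I`, and `A_n` is a Δ-sum with
`2n-1` parts, the (1-based) odd positions being single vertices and the even
positions copies of `A_{n-1}`. -/
def Atour : ℕ → Tournament
  | 0 => oneTour
  | 1 => oneTour
  | n + 2 =>
      deltaSum fun t : Fin (2 * (n + 2) - 1) => if Even t.1 then oneTour else Atour (n + 1)

/-- `Utour n` is the tournament `U_n = Δ(I, I, …, I)` with `2n-1` one-vertex parts. -/
def Utour (n : ℕ) : Tournament :=
  deltaSum fun _ : Fin (2 * n - 1) => oneTour

/-- `𝒟`: the closure of `{D_n : n ≥ 1}` under subtournaments up to isomorphism. -/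
def classD : Set Tournament :=
  {T | ∃ n : ℕ, 1 ≤ n ∧ (Dtour n).Contains T}

/-- `𝒜`: the closure of `{A_n : n ≥ 1}` under subtournaments up to isomorphism. -/
def classA : Set Tournament :=
  {T | ∃ n : ℕ, 1 ≤ n ∧ (Atour n).Contains T}

/-- `Δ₂ = Δ(L₂, L₂, L₂)`. -/
def delta2 : Tournament :=
  deltaSum ![linTour 2, linTour 2, linTour 2]

/-- The tournament `N`. -/
def Ntour : Tournament where
  V := Fin 5
  adj i j :=
    ![![false, true, false, true, false],
      ![false, false, true, true, true],
      ![true, false, false, true, true],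
      ![false, false, false, false, true],
      ![true, false, false, false, false]] i j = true
  irrefl := by decide
  total := by decide
  asymm := by decide

/-- The tournament `S₃`: `v_i → v_j` iff `j - i ∈ {1, 2} (mod 5)`. -/
def Stour3 : Tournament where
  V := Fin 5
  adj i j := (j.1 + 5 - i.1) % 5 = 1 ∨ (j.1 + 5 - i.1) % 5 = 2
  irrefl := by decide
  total := by decide
  asymm := by decide

/-- A vertex `v` outside `S` is mixed on `S` if it has both an out-neighbor and
an in-neighbor in `S`. -/
def MixedOn (T : Tournament) (v : T.V) (S : Set T.V) : Prop :=
  (∃ s ∈ S, T.adj v s) ∧ (∃ s ∈ S, T.adj s v)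

/-- A homogeneous set: `1 < |S| < |V(T)|` and no vertex outside `S` is mixed on `S`. -/
def Homog (T : Tournament) (S : Set T.V) : Prop :=
  1 < S.ncard ∧ S.ncard < Nat.card T.V ∧ ∀ v ∉ S, ¬ T.MixedOn v S

/-- A prime tournament has no homogeneous set. -/
def Prime (T : Tournament) : Prop := ¬ ∃ S : Set T.V, T.Homog S

/-- `P` is a Δ-partition of `T` with parts `P 0, …, P (m-1)`:
the parts are nonempty, partition `V(T)`, and all edges between distinct parts
follow the rule `deltaDir`. -/
def IsDeltaPartition (T : Tournament) {m : ℕ} (P : Fin m → Set T.V) : Prop :=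
  (∀ i, (P i).Nonempty) ∧
  (∀ v : T.V, ∃! i, v ∈ P i) ∧
  (∀ i j, i ≠ j → ∀ u ∈ P i, ∀ v ∈ P j, (T.adj u v ↔ deltaDir i j))

/-- The induced subtournament on a set of vertices. -/
noncomputable def induce (T : Tournament) (S : Set T.V) : Tournament where
  V := ↥S
  fintypeV := (Set.toFinite S).fintype
  adj u v := T.adj u.1 v.1
  irrefl := fun v => T.irrefl v.1
  total := fun u v h => T.total u.1 v.1 (fun hh => h (Subtype.ext hh))
  asymm := fun u v h => T.asymm u.1 v.1 h

/-- `u` and `v` are joined by an edge of the backedge graph of the ordering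
given by the list `l`: the `T`-edge between them goes backwards in `l`. -/
def BackAdj (T : Tournament) (l : List T.V) (u v : T.V) : Prop :=
  (T.adj u v ∧ [v, u].Sublist l) ∨ (T.adj v u ∧ [u, v].Sublist l)

/-- The backedge graph `B_σ(T)` of the ordering `σ = l`. -/
def backGraph (T : Tournament) (l : List T.V) : SimpleGraph T.V where
  Adj u v := T.BackAdj l u v
  symm := by
    constructor
    intro u v h
    rcases h with ⟨h, s⟩ | ⟨h, s⟩
    · exact Or.inr ⟨h, s⟩
    · exact Or.inl ⟨h, s⟩
  loopless := by
    constructor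
    intro v h
    rcases h with ⟨h, _⟩ | ⟨h, _⟩ <;> exact T.irrefl v h

/-- Forest orderings: a one-element ordering is a forest ordering, and the
concatenation `l₁ ++ l₂` of two nonempty forest orderings is one provided no
two edges of the backedge graph going between `l₁` and `l₂` lie in the same
connected component of the backedge graph. -/
inductive IsForestOrdering (T : Tournament) : List T.V → Prop
  | single (v : T.V) : IsForestOrdering T [v]
  | split (l₁ l₂ : List T.V) (h₁ : l₁ ≠ []) (h₂ : l₂ ≠ [])
      (hsep : ∀ a ∈ l₁, ∀ b ∈ l₂, ∀ c ∈ l₁, ∀ d ∈ l₂,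
        T.BackAdj (l₁ ++ l₂) a b → T.BackAdj (l₁ ++ l₂) c d →
        Relation.ReflTransGen (T.BackAdj (l₁ ++ l₂)) a c → a = c ∧ b = d)
      (f₁ : IsForestOrdering T l₁) (f₂ : IsForestOrdering T l₂) :
      IsForestOrdering T (l₁ ++ l₂)

/-- A forest tournament: one admitting a forest ordering of its vertex set. -/
def IsForestTournament (T : Tournament) : Prop :=
  ∃ l : List T.V, l.Nodup ∧ (∀ v, v ∈ l) ∧ IsForestOrdering T l

/-- The set of ordered pairs realizing backedges between `l₁` and `l₂`. -/
def splitEdges (T : Tournament) (l l₁ l₂ : List T.V) : Set (T.V × T.V) :=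
  {p | p.1 ∈ l₁ ∧ p.2 ∈ l₂ ∧ T.BackAdj l p.1 p.2}

/-- The thickness of the backedge graph of `l`: the minimum number of backedges
crossing a split of `l` into two nonempty intervals. -/
noncomputable def thickness (T : Tournament) (l : List T.V) : ℕ :=
  sInf {k | ∃ l₁ l₂ : List T.V, l = l₁ ++ l₂ ∧ l₁ ≠ [] ∧ l₂ ≠ [] ∧
    k = (T.splitEdges l l₁ l₂).ncard}

/-- The "length" `|φ x - φ y|` of an unordered pair under `φ`. -/
def phiLen {α : Type} (φ : α → ℕ) : Sym2 α → ℕ :=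
  Sym2.lift ⟨fun u v => max (φ u) (φ v) - min (φ u) (φ v), fun u v => by
    show max (φ u) (φ v) - min (φ u) (φ v) = max (φ v) (φ u) - min (φ v) (φ u)
    rw [max_comm (φ u) (φ v), min_comm (φ u) (φ v)]⟩

/-- The backedge graph of the ordering `σ_φ` induced by `φ`. -/
def backGraphPhi (T : Tournament) (φ : T.V → ℕ) : SimpleGraph T.V where
  Adj u v := (T.adj u v ∧ φ v < φ u) ∨ (T.adj v u ∧ φ u < φ v)
  symm := by
    constructor
    intro u v h
    rcases h with h | h
    · exact Or.inr h
    · exact Or.inl h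
  loopless := by
    constructor
    intro v h
    rcases h with ⟨_, h⟩ | ⟨_, h⟩ <;> exact lt_irrefl _ h

/-- Two distinct edges `e`, `f` of `B_{σ_φ}(T)` are `(r,s)`-comparable under `φ`:
some path with at most `s` edges contains both, and `1/r ≤ φ(e)/φ(f) ≤ r`. -/
def Comparable (T : Tournament) (φ : T.V → ℕ) (r s : ℕ) (e f : Sym2 T.V) : Prop :=
  e ≠ f ∧
  (∃ (a b : T.V) (p : (T.backGraphPhi φ).Walk a b),
      p.IsPath ∧ p.length ≤ s ∧ e ∈ p.edges ∧ f ∈ p.edges) ∧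
  phiLen φ e ≤ r * phiLen φ f ∧ phiLen φ f ≤ r * phiLen φ e

/-- The class `𝒞_{(r,s)}`. -/
def classC (r s : ℕ) : Set Tournament :=
  {T | ∃ φ : T.V → ℕ, (∀ v, 0 < φ v) ∧ Function.Injective φ ∧
    ∀ e ∈ (T.backGraphPhi φ).edgeSet, ∀ f ∈ (T.backGraphPhi φ).edgeSet,
      ¬ Comparable T φ r s e f}

/-- `φ` is `r`-incomparable: it is an injective positive labelling such that any
two distinct edges of `B_{σ_φ}(T)` in the same connected component have length
ratio greater than `r` (or less than `1/r`). -/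
def RIncomp (T : Tournament) (φ : T.V → ℕ) (r : ℕ) : Prop :=
  (∀ v, 0 < φ v) ∧ Function.Injective φ ∧
  ∀ e ∈ (T.backGraphPhi φ).edgeSet, ∀ f ∈ (T.backGraphPhi φ).edgeSet, e ≠ f →
    (∃ a b, a ∈ e ∧ b ∈ f ∧ (T.backGraphPhi φ).Reachable a b) →
    (r * phiLen φ f < phiLen φ e ∨ r * phiLen φ e < phiLen φ f)

/-- `l` is an ordering of the vertex set of `T`. -/
def IsOrdering (T : Tournament) (l : List T.V) : Prop :=
  l.Nodup ∧ ∀ v, v ∈ l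

/-- The ordering `l` is incomparable: for every `r ≥ 1` there is an
`r`-incomparable `φ` with `σ_φ = l` (i.e. `φ` strictly increasing along `l`). -/
def IsIncompOrdering (T : Tournament) (l : List T.V) : Prop :=
  ∀ r : ℕ, 0 < r → ∃ φ : T.V → ℕ, RIncomp T φ r ∧ l.Pairwise (fun u v => φ u < φ v)

end Tournament

/-!
Both `D_n` and `A_n` have chromatic number at least `n`, so a heroic set `𝓗` with bound `c`
cannot avoid `𝒟`: otherwise `D_(c+1)` would be `𝓗`-free, and likewise for `𝒜`.

The lower bounds go by induction through one observation about a Δ-sum: if parts `p → q → r → p`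
form a directed triangle of parts and a vertex of `p` and a vertex of `r` share a colour, then no
vertex of `q` has that colour, so part `q` is coloured with one colour fewer. In `D_n` this
applies to the triangle of the trisection; in `A_n`, two singleton parts `2a < 2b` with the same
colour form a triangle with the part `2a + 1` between them, and otherwise the `n` singleton parts
already use `n` colours.
-/

namespace Tournament

def IsTransColoring (T : Tournament) {k : ℕ} (c : T.V → Fin k) : Prop :=
  ∀ i, T.IsTransSet {v | c v = i}

def Colorable (T : Tournament) (k : ℕ) : Prop :=
  ∃ c : T.V → Fin k, T.IsTransColoring c

theorem colorable_chromNum (T : Tournament) : T.Colorable T.chromNum := by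
  refine Nat.sInf_mem (s := {k | T.Colorable k}) ⟨_, Fintype.equivFin T.V, ?_⟩
  intro i a ha b hb _ _ hab _
  have : a = b := (Fintype.equivFin T.V).injective (ha.trans hb.symm)
  exact absurd (this ▸ hab) (T.irrefl b)

theorem IsTransColoring.ne_of_cycle {T : Tournament} {k : ℕ} {c : T.V → Fin k}
    (hc : T.IsTransColoring c) {a b d : T.V} (hab : T.adj a b) (hbd : T.adj b d)
    (hda : T.adj d a) (had : c a = c d) : c b ≠ c a := fun hba =>
  T.asymm a d (hc (c a) a rfl b hba d had.symm hab hbd) hda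

theorem IsTransColoring.colorable_of_forall_ne {S T : Tournament} {k : ℕ}
    {c : T.V → Fin (k + 1)} (hc : T.IsTransColoring c) (f : S.V → T.V)
    (hf : ∀ u v, S.adj u v ↔ T.adj (f u) (f v)) (i₀ : Fin (k + 1))
    (havoid : ∀ v, c (f v) ≠ i₀) : S.Colorable k := by
  choose g hg using fun v => Fin.exists_succAbove_eq (havoid v)
  refine ⟨g, fun i a ha b hb d hd hab hbd => (hf a d).2 ?_⟩
  have hcol : ∀ v, g v = i → c (f v) = i₀.succAbove i := fun v hv => hv ▸ (hg v).symm
  exact hc _ (f a) (hcol a ha) (f b) (hcol b hb) (f d) (hcol d hd)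
    ((hf a b).1 hab) ((hf b d).1 hbd)

theorem Contains.refl (T : Tournament) : T.Contains T :=
  ⟨id, Function.injective_id, fun _ _ => Iff.rfl⟩

theorem Contains.trans {R S T : Tournament} (hRS : R.Contains S) (hST : S.Contains T) :
    R.Contains T := by
  obtain ⟨f, hf, hfadj⟩ := hRS
  obtain ⟨g, hg, hgadj⟩ := hST
  exact ⟨f ∘ g, hf.comp hg, fun u v => (hgadj u v).trans (hfadj (g u) (g v))⟩

theorem hereditary_setOf_contains (G : ℕ → Tournament) (P : ℕ → Prop) :
    Hereditary {T | ∃ n, P n ∧ (G n).Contains T} :=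
  fun _ ⟨n, hn, hT⟩ _ hS => ⟨n, hn, hT.trans hS⟩

theorem Heroic.inter_nonempty {𝓗 C : Set Tournament} (h : Heroic 𝓗) (hC : Hereditary C)
    (hunbdd : ∀ c, ∃ T ∈ C, c < T.chromNum) : (𝓗 ∩ C).Nonempty := by
  obtain ⟨c, hc⟩ := h
  obtain ⟨T, hTC, hT⟩ := hunbdd c
  by_contra hempty
  have hfree : ∀ X ∈ 𝓗, ¬ T.Contains X := fun X hX hTX =>
    hempty ⟨X, hX, hC T hTC X hTX⟩
  exact absurd (hc T hfree) (not_le.2 hT)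

section deltaSum

variable {m : ℕ} {F : Fin m → Tournament}

theorem deltaSum_adj_mk_iff (p : Fin m) (u v : (F p).V) :
    (deltaSum F).adj ⟨p, u⟩ ⟨p, v⟩ ↔ (F p).adj u v := by
  refine ⟨?_, fun h => Or.inr ⟨p, u, v, h, rfl, rfl⟩⟩
  rintro (h | ⟨i, u', v', h, hu, hv⟩)
  · exact absurd h (deltaDir_irrefl p)
  · obtain ⟨rfl, hu⟩ := Sigma.mk.inj_iff.1 hu
    cases eq_of_heq hu
    cases eq_of_heq (Sigma.mk.inj_iff.1 hv).2
    exact h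

theorem IsTransColoring.colorable_part {k : ℕ} {c : (deltaSum F).V → Fin (k + 1)}
    (hc : (deltaSum F).IsTransColoring c) (q : Fin m) (i₀ : Fin (k + 1))
    (havoid : ∀ y, c ⟨q, y⟩ ≠ i₀) : (F q).Colorable k :=
  hc.colorable_of_forall_ne _ (fun u v => (deltaSum_adj_mk_iff q u v).symm) i₀ havoid

theorem IsTransColoring.colorable_part_of_cycle {k : ℕ} {c : (deltaSum F).V → Fin (k + 1)}
    (hc : (deltaSum F).IsTransColoring c) {p q r : Fin m} (hpq : deltaDir p q)
    (hqr : deltaDir q r) (hrp : deltaDir r p) {x : (F p).V} {z : (F r).V}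
    (hxz : c ⟨p, x⟩ = c ⟨r, z⟩) : (F q).Colorable k :=
  hc.colorable_part q _ fun _ => hc.ne_of_cycle (Or.inl hpq) (Or.inl hqr) (Or.inl hrp) hxz

theorem IsTransColoring.le_or_colorable_odd_part {n k : ℕ} {F : Fin (2 * n - 1) → Tournament}
    {c : (deltaSum F).V → Fin (k + 1)} (hc : (deltaSum F).IsTransColoring c)
    (hne : ∀ i : Fin (2 * n - 1), Even i.1 → Nonempty (F i).V) :
    n ≤ k + 1 ∨ ∃ q : Fin (2 * n - 1), ¬ Even q.1 ∧ (F q).Colorable k := by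
  refine or_iff_not_imp_right.2 fun hodd => ?_
  let v : Fin n → (deltaSum F).V := fun a =>
    ⟨⟨2 * a, by omega⟩, Classical.choice (hne _ (even_two_mul a.1))⟩
  have hdistinct : ∀ a b : Fin n, a < b → c (v a) ≠ c (v b) := by
    intro a b hab heq
    rw [Fin.lt_def] at hab
    refine hodd ⟨⟨2 * a + 1, by omega⟩, Nat.not_even_two_mul_add_one a, ?_⟩
    refine hc.colorable_part_of_cycle ?_ ?_ ?_ heq
    · exact Or.inl ⟨Fin.mk_lt_mk.2 (by omega), fun h => Nat.not_even_two_mul_add_one a h.2⟩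
    · exact Or.inl ⟨Fin.mk_lt_mk.2 (by omega), fun h => Nat.not_even_two_mul_add_one a h.1⟩
    · exact Or.inr ⟨Fin.mk_lt_mk.2 (by omega), even_two_mul b.1, even_two_mul a.1⟩
  simpa using Fintype.card_le_of_injective _ (Function.Injective.of_lt_imp_ne hdistinct)

end deltaSum

theorem le_of_colorable_Dtour : ∀ {n k : ℕ}, (Dtour n).Colorable k → n ≤ k
  | 0, _, _ => Nat.zero_le _
  | 1, _, ⟨c, _⟩ => (c ()).pos
  | n + 2, 0, ⟨c, _⟩ => (c ⟨0, ()⟩).elim0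
  | n + 2, k + 1, ⟨c, hc⟩ => by
    have hpart : (Dtour (n + 1)).Colorable k := by
      by_cases h : ∃ a, c ⟨1, a⟩ = c ⟨0, ()⟩
      · obtain ⟨a, ha⟩ := h
        exact hc.colorable_part_of_cycle (p := 1) (q := 2) (r := 0) (by unfold deltaDir; decide)
          (by unfold deltaDir; decide) (by unfold deltaDir; decide) ha
      · exact hc.colorable_part 1 _ (not_exists.1 h)
    have := le_of_colorable_Dtour hpart
    omega

theorem le_of_colorable_Atour : ∀ {n k : ℕ}, (Atour n).Colorable k → n ≤ k
  | 0, _, _ => Nat.zero_le _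
  | 1, _, ⟨c, _⟩ => (c ()).pos
  | n + 2, k, ⟨c, hc⟩ => by
    have hne (i : Fin (2 * (n + 2) - 1)) (hi : Even i.1) :
        Nonempty (if Even i.1 then oneTour else Atour (n + 1)).V := by
      rw [if_pos hi]
      exact ⟨()⟩
    obtain ⟨x⟩ := hne ⟨0, by omega⟩ Even.zero
    obtain ⟨k, rfl⟩ := Nat.exists_eq_succ_of_ne_zero (c ⟨_, x⟩).pos.ne'
    rcases hc.le_or_colorable_odd_part hne with hle | ⟨q, hq, hpart⟩
    · exact hle
    · rw [if_neg hq] at hpart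
      have := le_of_colorable_Atour hpart
      omega

end Tournament

open Tournament in
/-- Every heroic set contains a tournament of `𝒟` and a
tournament of `𝒜`. -/
theorem heroic_meets_classD_classA (𝓗 : Set Tournament) (h : Heroic 𝓗) :
    (𝓗 ∩ classD).Nonempty ∧ (𝓗 ∩ classA).Nonempty := by
  refine ⟨h.inter_nonempty (hereditary_setOf_contains _ _) fun c => ⟨Dtour (c + 1), ?_, ?_⟩,
    h.inter_nonempty (hereditary_setOf_contains _ _) fun c => ⟨Atour (c + 1), ?_, ?_⟩⟩
  · exact ⟨c + 1, by omega, Contains.refl _⟩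
  · exact le_of_colorable_Dtour (colorable_chromNum _)
  · exact ⟨c + 1, by omega, Contains.refl _⟩
  · exact le_of_colorable_Atour (colorable_chromNum _)
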